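/- Let p > 1, C > 0, κ ≥ 0, and let σ : ℝ^{m×d} → ℝ satisfy |σ(A) − σ(B)| ≤ C (κ + ‖A‖^{p−1} + ‖B‖^{p−1}) ‖A − B‖ for all m×d matrices A, B. Let R > 0, let v : B(0,R) → ℝ^m be continuously differentiable with ∫_{B(0,R)} ‖Dv‖^p dz < ∞ and with σ(Dv) integrable, and let Ψ : ℝ^m → ℝ^m be continuously differentiable with Λ = sup_z ‖DΨ(z)‖ < ∞ and θ = sup_z ‖DΨ(z) − I‖ < ∞. Then σ(D(Ψ∘v)) is integrable and |∫_{B(0,R)} σ(Dv) dz − ∫_{B(0,R)} σ(D(Ψ∘v)) dz| ≤ C θ [ κ |B(0,R)|^{(p−1)/p} (∫_{B(0,R)} ‖Dv‖^p dz)^{1/p} + (1 + Λ^{p−1}) ∫_{B(0,R)} ‖Dv‖^p dz ]. -/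

import Mathlib

open Filter Topology MeasureTheory Set

attribute [local instance] Matrix.frobeniusNormedAddCommGroup Matrix.frobeniusNormedSpace

/-- The Jacobian matrix of a map between Euclidean spaces, in the standard bases. -/
noncomputable def matDeriv (d m : ℕ)
    (v : EuclideanSpace ℝ (Fin d) → EuclideanSpace ℝ (Fin m))
    (z : EuclideanSpace ℝ (Fin d)) : Matrix (Fin m) (Fin d) ℝ :=
  LinearMap.toMatrix (PiLp.basisFun 2 ℝ (Fin d)) (PiLp.basisFun 2 ℝ (Fin m))
    (fderiv ℝ v z).toLinearMap

/-!
By the chain rule `D(Ψ∘v)(z) = M A` with `M = DΨ(v z)` and `A = Dv(z)`. Since `A - M A = (I - M) A`,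
the growth condition on `σ` gives pointwise
`|σ(A) - σ(M A)| ≤ C (κ + ‖A‖^{p-1} + Λ^{p-1} ‖A‖^{p-1}) θ ‖A‖ = C θ (κ ‖A‖ + (1 + Λ^{p-1}) ‖A‖^p)`.
Integrating over the ball and bounding `∫ ‖Dv‖` by Hölder's inequality against the constant `1`
gives the estimate. All integrands are continuous, hence bounded on the ball, so they are integrable.
-/

theorem continuous_of_abs_sub_le_growth {E : Type*} [SeminormedAddCommGroup E] {σ : E → ℝ}
    {C κ q : ℝ} (hq : 0 ≤ q)
    (hσ : ∀ A B : E, |σ A - σ B| ≤ C * (κ + ‖A‖ ^ q + ‖B‖ ^ q) * ‖A - B‖) :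
    Continuous σ := by
  refine continuous_iff_continuousAt.2 fun A => ?_
  have hbound : Continuous fun B : E => C * (κ + ‖B‖ ^ q + ‖A‖ ^ q) * ‖B - A‖ := by
    have := Real.continuous_rpow_const hq
    fun_prop
  have hlim : Tendsto (fun B : E => C * (κ + ‖B‖ ^ q + ‖A‖ ^ q) * ‖B - A‖) (𝓝 A) (𝓝 0) := by
    simpa using hbound.tendsto A
  rw [ContinuousAt, tendsto_iff_dist_tendsto_zero]
  exact squeeze_zero (fun _ => dist_nonneg) (fun B => (Real.dist_eq _ _).trans_le (hσ B A)) hlim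

theorem abs_apply_sub_apply_mul_le {l n : Type*} [Fintype l] [Fintype n] [DecidableEq l]
    {σ : Matrix l n ℝ → ℝ} {C κ p Λ θ : ℝ} (hC : 0 ≤ C) (hκ : 0 ≤ κ) (hp : 1 ≤ p)
    (hσ : ∀ A B : Matrix l n ℝ,
      |σ A - σ B| ≤ C * (κ + ‖A‖ ^ (p - 1) + ‖B‖ ^ (p - 1)) * ‖A - B‖)
    (A : Matrix l n ℝ) {M : Matrix l l ℝ} (hMΛ : ‖M‖ ≤ Λ) (hMθ : ‖M - 1‖ ≤ θ) :
    |σ A - σ (M * A)| ≤ C * θ * (κ * ‖A‖ + (1 + Λ ^ (p - 1)) * ‖A‖ ^ p) := by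
  have hΛ : 0 ≤ Λ := (norm_nonneg _).trans hMΛ
  have hp1 : 0 ≤ p - 1 := sub_nonneg.2 hp
  have hdiff : ‖A - M * A‖ ≤ θ * ‖A‖ := by
    calc ‖A - M * A‖ = ‖(1 - M) * A‖ := by rw [Matrix.sub_mul, Matrix.one_mul]
      _ ≤ ‖1 - M‖ * ‖A‖ := Matrix.frobenius_norm_mul _ _
      _ ≤ θ * ‖A‖ := by gcongr; rwa [norm_sub_rev]
  have hMA : ‖M * A‖ ^ (p - 1) ≤ Λ ^ (p - 1) * ‖A‖ ^ (p - 1) := by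
    rw [← Real.mul_rpow hΛ (norm_nonneg _)]
    exact Real.rpow_le_rpow (norm_nonneg _)
      ((Matrix.frobenius_norm_mul _ _).trans (by gcongr)) hp1
  have hpow : ‖A‖ ^ (p - 1) * ‖A‖ = ‖A‖ ^ p := by
    rw [← Real.rpow_add_one' (norm_nonneg _) (by linarith), sub_add_cancel]
  have := Real.rpow_nonneg (norm_nonneg A) (p - 1)
  have := Real.rpow_nonneg hΛ (p - 1)
  calc |σ A - σ (M * A)|
      ≤ C * (κ + ‖A‖ ^ (p - 1) + ‖M * A‖ ^ (p - 1)) * ‖A - M * A‖ := hσ _ _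
    _ ≤ C * (κ + ‖A‖ ^ (p - 1) + Λ ^ (p - 1) * ‖A‖ ^ (p - 1)) * (θ * ‖A‖) := by gcongr
    _ = C * θ * (κ * ‖A‖ + (1 + Λ ^ (p - 1)) * (‖A‖ ^ (p - 1) * ‖A‖)) := by ring
    _ = C * θ * (κ * ‖A‖ + (1 + Λ ^ (p - 1)) * ‖A‖ ^ p) := by rw [hpow]

theorem matDeriv_comp {d n m : ℕ} {v : EuclideanSpace ℝ (Fin d) → EuclideanSpace ℝ (Fin n)}
    {Ψ : EuclideanSpace ℝ (Fin n) → EuclideanSpace ℝ (Fin m)} {z : EuclideanSpace ℝ (Fin d)}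
    (hΨ : DifferentiableAt ℝ Ψ (v z)) (hv : DifferentiableAt ℝ v z) :
    matDeriv d m (Ψ ∘ v) z = matDeriv n m Ψ (v z) * matDeriv d n v z := by
  simp only [matDeriv, fderiv_comp z hΨ hv]
  exact LinearMap.toMatrix_comp _ (PiLp.basisFun 2 ℝ (Fin n)) _ _ _

theorem continuous_matDeriv {d m : ℕ} {v : EuclideanSpace ℝ (Fin d) → EuclideanSpace ℝ (Fin m)}
    (hv : ContDiff ℝ 1 v) : Continuous (matDeriv d m v) := by
  let toMatrix : (EuclideanSpace ℝ (Fin d) →L[ℝ] EuclideanSpace ℝ (Fin m)) →ₗ[ℝ]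
      Matrix (Fin m) (Fin d) ℝ :=
    (LinearMap.toMatrix (PiLp.basisFun 2 ℝ (Fin d))
      (PiLp.basisFun 2 ℝ (Fin m))).toLinearMap.comp (ContinuousLinearMap.coeLM ℝ)
  exact toMatrix.continuous_of_finiteDimensional.comp (hv.continuous_fderiv one_ne_zero)

theorem Continuous.memLp_restrict_ball {X F : Type*} [PseudoMetricSpace X] [ProperSpace X]
    [MeasurableSpace X] [OpensMeasurableSpace X] {μ : Measure X} [IsFiniteMeasureOnCompacts μ]
    [NormedAddCommGroup F] {f : X → F} (hf : Continuous f) (x : X) (r : ℝ) (p : ENNReal) :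
    MemLp f p (μ.restrict (Metric.ball x r)) := by
  have : IsFiniteMeasure (μ.restrict (Metric.ball x r)) :=
    isFiniteMeasure_restrict.2 measure_ball_lt_top.ne
  obtain ⟨K, hK⟩ := (isCompact_closedBall x r).exists_bound_of_continuousOn hf.continuousOn
  refine MemLp.of_bound hf.aestronglyMeasurable K ((ae_restrict_iff' measurableSet_ball).2 ?_)
  exact Eventually.of_forall fun z hz => hK z (Metric.ball_subset_closedBall hz)

section FiniteMeasure

variable {α E : Type*} [MeasurableSpace α] {μ : Measure α} [IsFiniteMeasure μ]
  [NormedAddCommGroup E] {p : ℝ}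

theorem integral_norm_le_measure_univ_rpow_mul (hp : 1 < p) {F : α → E}
    (hF : MemLp F (ENNReal.ofReal p) μ) :
    ∫ x, ‖F x‖ ∂μ ≤ (μ univ).toReal ^ ((p - 1) / p) * (∫ x, ‖F x‖ ^ p ∂μ) ^ (1 / p) := by
  have h := integral_mul_le_Lp_mul_Lq_of_nonneg (Real.HolderConjugate.conjExponent hp)
    (Eventually.of_forall fun x => norm_nonneg (F x))
    (Eventually.of_forall fun _ => zero_le_one) hF.norm (memLp_const (1 : ℝ))
  simp only [mul_one, Real.one_rpow, integral_const, smul_eq_mul, measureReal_def,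
    Real.conjExponent, one_div_div] at h
  rwa [mul_comm] at h

theorem abs_integral_sub_le_of_abs_sub_le (hp : 1 < p) {K κ L : ℝ} (hK : 0 ≤ K) (hκ : 0 ≤ κ)
    {f g : α → ℝ} {F : α → E} (hf : Integrable f μ) (hg : Integrable g μ)
    (hF : MemLp F (ENNReal.ofReal p) μ)
    (hfg : ∀ x, |f x - g x| ≤ K * (κ * ‖F x‖ + L * ‖F x‖ ^ p)) :
    |∫ x, f x ∂μ - ∫ x, g x ∂μ| ≤
      K * (κ * (μ univ).toReal ^ ((p - 1) / p) * (∫ x, ‖F x‖ ^ p ∂μ) ^ (1 / p) +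
        L * ∫ x, ‖F x‖ ^ p ∂μ) := by
  have hF1 : Integrable (fun x => ‖F x‖) μ := (hF.integrable (by simpa using hp.le)).norm
  have hFp : Integrable (fun x => ‖F x‖ ^ p) μ := by
    simpa [ENNReal.toReal_ofReal (by linarith : 0 ≤ p)] using hF.integrable_norm_rpow'
  have hHolder := mul_le_mul_of_nonneg_left (integral_norm_le_measure_univ_rpow_mul hp hF) hκ
  calc |∫ x, f x ∂μ - ∫ x, g x ∂μ| = |∫ x, (f x - g x) ∂μ| := by rw [integral_sub hf hg]
    _ ≤ ∫ x, |f x - g x| ∂μ := abs_integral_le_integral_abs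
    _ ≤ ∫ x, K * (κ * ‖F x‖ + L * ‖F x‖ ^ p) ∂μ :=
      integral_mono (hf.sub hg).abs (((hF1.const_mul κ).add (hFp.const_mul L)).const_mul K) hfg
    _ = K * (κ * ∫ x, ‖F x‖ ∂μ + L * ∫ x, ‖F x‖ ^ p ∂μ) := by
      rw [integral_const_mul, integral_add (hF1.const_mul κ) (hFp.const_mul L),
        integral_const_mul, integral_const_mul]
    _ ≤ _ := by rw [← mul_assoc κ] at hHolder; gcongr

end FiniteMeasure

theorem stmt_17_general (d m : ℕ) (p C κ : ℝ)
    (hp : 1 < p) (hC : 0 < C) (hκ : 0 ≤ κ)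
    (σ : Matrix (Fin m) (Fin d) ℝ → ℝ)
    (hσ : ∀ A B : Matrix (Fin m) (Fin d) ℝ,
      |σ A - σ B| ≤ C * (κ + ‖A‖ ^ (p - 1) + ‖B‖ ^ (p - 1)) * ‖A - B‖)
    (R : ℝ)
    (v : EuclideanSpace ℝ (Fin d) → EuclideanSpace ℝ (Fin m)) (hv : ContDiff ℝ 1 v)
    (Ψ : EuclideanSpace ℝ (Fin m) → EuclideanSpace ℝ (Fin m)) (hΨ : ContDiff ℝ 1 Ψ)
    (Λ θ : ℝ)
    (hΛ : ∀ z, ‖matDeriv m m Ψ z‖ ≤ Λ)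
    (hθ : ∀ z, ‖matDeriv m m Ψ z - 1‖ ≤ θ) :
    IntegrableOn (fun z => σ (matDeriv d m (Ψ ∘ v) z))
        (Metric.ball (0 : EuclideanSpace ℝ (Fin d)) R) volume ∧
      |(∫ z in Metric.ball (0 : EuclideanSpace ℝ (Fin d)) R, σ (matDeriv d m v z)) -
          ∫ z in Metric.ball (0 : EuclideanSpace ℝ (Fin d)) R, σ (matDeriv d m (Ψ ∘ v) z)| ≤
        C * θ *
          (κ * (volume (Metric.ball (0 : EuclideanSpace ℝ (Fin d)) R)).toReal ^ ((p - 1) / p) *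
              (∫ z in Metric.ball (0 : EuclideanSpace ℝ (Fin d)) R,
                ‖matDeriv d m v z‖ ^ p) ^ (1 / p) +
            (1 + Λ ^ (p - 1)) *
              ∫ z in Metric.ball (0 : EuclideanSpace ℝ (Fin d)) R,
                ‖matDeriv d m v z‖ ^ p) := by
  have : IsFiniteMeasure (volume.restrict (Metric.ball (0 : EuclideanSpace ℝ (Fin d)) R)) :=
    isFiniteMeasure_restrict.2 measure_ball_lt_top.ne
  have hσc : Continuous σ := continuous_of_abs_sub_le_growth (sub_nonneg.2 hp.le) hσ
  have hintegrable : ∀ {f : EuclideanSpace ℝ (Fin d) → ℝ}, Continuous f →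
      IntegrableOn f (Metric.ball 0 R) := fun hf =>
    memLp_one_iff_integrable.1 (hf.memLp_restrict_ball 0 R 1)
  have hcomp : ∀ z, matDeriv d m (Ψ ∘ v) z = matDeriv m m Ψ (v z) * matDeriv d m v z :=
    fun z => matDeriv_comp (hΨ.differentiable one_ne_zero _) (hv.differentiable one_ne_zero z)
  have hpointwise : ∀ z, |σ (matDeriv d m v z) - σ (matDeriv d m (Ψ ∘ v) z)| ≤
      C * θ * (κ * ‖matDeriv d m v z‖ + (1 + Λ ^ (p - 1)) * ‖matDeriv d m v z‖ ^ p) :=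
    fun z => hcomp z ▸ abs_apply_sub_apply_mul_le hC.le hκ hp.le hσ _ (hΛ _) (hθ _)
  have hθ0 : 0 ≤ θ := (norm_nonneg _).trans (hθ 0)
  refine ⟨hintegrable (hσc.comp (continuous_matDeriv (hΨ.comp hv))), ?_⟩
  simpa only [Measure.restrict_apply_univ, Function.comp_apply] using
    abs_integral_sub_le_of_abs_sub_le hp (mul_nonneg hC.le hθ0) hκ
      (hintegrable (hσc.comp (continuous_matDeriv hv)))
      (hintegrable (hσc.comp (continuous_matDeriv (hΨ.comp hv))))
      ((continuous_matDeriv hv).memLp_restrict_ball 0 R _) hpointwise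

/-- energy comparison between a map `v` and its composition `Ψ∘v` with a `C¹`
map close to the identity, for an integrand `σ` with `p`-growth Lipschitz modulus:
`|∫ σ(Dv) − ∫ σ(D(Ψ∘v))| ≤ C θ [κ |B|^{(p−1)/p} (∫‖Dv‖^p)^{1/p} + (1 + Λ^{p−1}) ∫‖Dv‖^p]`,
where `Λ = sup ‖DΨ‖` and `θ = sup ‖DΨ − I‖`. -/
theorem stmt_17 (d m : ℕ) (hd : 1 ≤ d) (hm : 1 ≤ m) (p C κ : ℝ)
    (hp : 1 < p) (hC : 0 < C) (hκ : 0 ≤ κ)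
    (σ : Matrix (Fin m) (Fin d) ℝ → ℝ)
    (hσ : ∀ A B : Matrix (Fin m) (Fin d) ℝ,
      |σ A - σ B| ≤ C * (κ + ‖A‖ ^ (p - 1) + ‖B‖ ^ (p - 1)) * ‖A - B‖)
    (R : ℝ) (hR : 0 < R)
    (v : EuclideanSpace ℝ (Fin d) → EuclideanSpace ℝ (Fin m)) (hv : ContDiff ℝ 1 v)
    (hvp : IntegrableOn (fun z => ‖matDeriv d m v z‖ ^ p)
      (Metric.ball (0 : EuclideanSpace ℝ (Fin d)) R) volume)
    (hσv : IntegrableOn (fun z => σ (matDeriv d m v z))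
      (Metric.ball (0 : EuclideanSpace ℝ (Fin d)) R) volume)
    (Ψ : EuclideanSpace ℝ (Fin m) → EuclideanSpace ℝ (Fin m)) (hΨ : ContDiff ℝ 1 Ψ)
    (Λ θ : ℝ)
    (hΛ : ∀ z, ‖matDeriv m m Ψ z‖ ≤ Λ)
    (hθ : ∀ z, ‖matDeriv m m Ψ z - 1‖ ≤ θ) :
    IntegrableOn (fun z => σ (matDeriv d m (Ψ ∘ v) z))
        (Metric.ball (0 : EuclideanSpace ℝ (Fin d)) R) volume ∧
      |(∫ z in Metric.ball (0 : EuclideanSpace ℝ (Fin d)) R, σ (matDeriv d m v z)) -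
          ∫ z in Metric.ball (0 : EuclideanSpace ℝ (Fin d)) R, σ (matDeriv d m (Ψ ∘ v) z)| ≤
        C * θ *
          (κ * (volume (Metric.ball (0 : EuclideanSpace ℝ (Fin d)) R)).toReal ^ ((p - 1) / p) *
              (∫ z in Metric.ball (0 : EuclideanSpace ℝ (Fin d)) R,
                ‖matDeriv d m v z‖ ^ p) ^ (1 / p) +
            (1 + Λ ^ (p - 1)) *
              ∫ z in Metric.ball (0 : EuclideanSpace ℝ (Fin d)) R,
                ‖matDeriv d m v z‖ ^ p) :=
  stmt_17_general d m p C κ hp hC hκ σ hσ R v hv Ψ hΨ Λ θ hΛ hθ
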